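/- arXiv:1009.3891 — 2 statements merged into one kernel-verified Lean document; each statement's English description precedes it below -/
import Mathlib

section
/- Csiszár–Körner sum identity: for any jointly distributed random variables W, B₁,…,B_n, E₁,…,E_n with values in finite sets, Σ_{i=1}^n I(E_i ; B_{i+1}ⁿ | W, E^{i−1}) = Σ_{i=1}^n I(B_i ; E^{i−1} | W, B_{i+1}ⁿ). -/
noncomputable section

namespace SLSC

open scoped BigOperators

variable {Ω : Type*} [Fintype Ω]

open Classical in
/-- Probability that the random variable `f` takes the value `x`, under the
probability mass function `w` on the finite sample space `Ω`. -/
def pr {X : Type*} (w : Ω → ℝ) (f : Ω → X) (x : X) : ℝ :=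
  ∑ ω, if f ω = x then w ω else 0

/-- `w` is a probability mass function on `Ω`. -/
def IsPMF (w : Ω → ℝ) : Prop := (∀ ω, 0 ≤ w ω) ∧ ∑ ω, w ω = 1

/-- Shannon entropy (base 2) of the random variable `f`. -/
def H {X : Type*} [Fintype X] (w : Ω → ℝ) (f : Ω → X) : ℝ :=
  -∑ x, pr w f x * Real.logb 2 (pr w f x)

/-- Conditional entropy `H(f | g)` (base 2). -/
def condH {X Y : Type*} [Fintype X] [Fintype Y] (w : Ω → ℝ) (f : Ω → X) (g : Ω → Y) : ℝ :=
  H w (fun ω => (f ω, g ω)) - H w g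

/-- Mutual information `I(f ; g)` (base 2). -/
def MI {X Y : Type*} [Fintype X] [Fintype Y] (w : Ω → ℝ) (f : Ω → X) (g : Ω → Y) : ℝ :=
  H w f + H w g - H w (fun ω => (f ω, g ω))

/-- Conditional mutual information `I(f ; g | h)` (base 2). -/
def condMI {X Y Z : Type*} [Fintype X] [Fintype Y] [Fintype Z]
    (w : Ω → ℝ) (f : Ω → X) (g : Ω → Y) (h : Ω → Z) : ℝ :=
  condH w f h - condH w f (fun ω => (g ω, h ω))

/-- Expectation of the real random variable `f`. -/
def expect (w : Ω → ℝ) (f : Ω → ℝ) : ℝ := ∑ ω, w ω * f ω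

/-- Markov chain `f – g – h` : `f` and `h` are conditionally independent given `g`. -/
def Markov {X Y Z : Type*} (w : Ω → ℝ) (f : Ω → X) (g : Ω → Y) (h : Ω → Z) : Prop :=
  ∀ x y z,
    pr w (fun ω => (f ω, g ω, h ω)) (x, y, z) * pr w g y
      = pr w (fun ω => (f ω, g ω)) (x, y) * pr w (fun ω => (g ω, h ω)) (y, z)

/-- Markov chain `f – g – h – k` : each variable is conditionally independent of
the preceding ones given its immediate predecessor. -/
def Markov4 {X Y Z T : Type*} (w : Ω → ℝ)
    (f : Ω → X) (g : Ω → Y) (h : Ω → Z) (k : Ω → T) : Prop :=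
  Markov w f g h ∧ Markov w (fun ω => (f ω, g ω)) h k

variable {𝒜 ℬ ℰ : Type*} [Fintype 𝒜] [Fintype ℬ] [Fintype ℰ]

/-- Weight of the i.i.d. source `(Aⁿ,Bⁿ,Eⁿ)` with per-letter distribution `p`. -/
def iidW (p : 𝒜 × ℬ × ℰ → ℝ) (n : ℕ) : (Fin n → 𝒜 × ℬ × ℰ) → ℝ :=
  fun ω => ∏ i, p (ω i)

/-- Alice's source sequence `Aⁿ`. -/
def An (n : ℕ) : (Fin n → 𝒜 × ℬ × ℰ) → Fin n → 𝒜 := fun ω i => (ω i).1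

/-- Bob's side-information sequence `Bⁿ`. -/
def Bn (n : ℕ) : (Fin n → 𝒜 × ℬ × ℰ) → Fin n → ℬ := fun ω i => (ω i).2.1

/-- Eve's side-information sequence `Eⁿ`. -/
def En (n : ℕ) : (Fin n → 𝒜 × ℬ × ℰ) → Fin n → ℰ := fun ω i => (ω i).2.2

/-- `(R,D,Δ)` is achievable for the memoryless source `p` with distortion measure `d`:
for every `ε > 0` there is an `(n, R+ε)`-code (encoder `f`, decoder `g`, at most
`2^{n(R+ε)}` messages) whose expected distortion at Bob is at most `D + ε` and whose
normalized equivocation at Eve is at least `Δ - ε`. -/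
def Achievable (p : 𝒜 × ℬ × ℰ → ℝ) (d : 𝒜 → 𝒜 → ℝ) (R D Δ : ℝ) : Prop :=
  ∀ ε > (0 : ℝ), ∃ n M : ℕ, 0 < n ∧ 0 < M ∧
    (M : ℝ) ≤ (2 : ℝ) ^ ((n : ℝ) * (R + ε)) ∧
    ∃ (f : (Fin n → 𝒜) → Fin M) (g : Fin M → (Fin n → ℬ) → Fin n → 𝒜),
      expect (iidW p n)
          (fun ω => ((n : ℝ))⁻¹ * ∑ i, d (An n ω i) (g (f (An n ω)) (Bn n ω) i)) ≤ D + ε ∧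
      Δ - ε ≤ ((n : ℝ))⁻¹ * condH (iidW p n) (An n) (fun ω => (f (An n ω), En n ω))

/-- The single-letter region of Theorem 1, with auxiliary alphabets `Fin m` (for `U`)
and `Fin k` (for `V`): there is a joint pmf `q` of `(U,V,A,B,E)` with marginal `p`
on `(A,B,E)`, a Markov chain `U – V – A – (B,E)`, and a function `Â : 𝒱 × ℬ → 𝒜`
such that `R ≥ I(V;A|B)`, `D ≥ E[d(A, Â(V,B))]` and
`Δ ≤ [H(A|V,B) + I(A;B|U) - I(A;E|U)]₊`. -/
def InRegion (p : 𝒜 × ℬ × ℰ → ℝ) (d : 𝒜 → 𝒜 → ℝ) (R D Δ : ℝ) (m k : ℕ) : Prop :=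
  ∃ (q : Fin m × Fin k × 𝒜 × ℬ × ℰ → ℝ) (Ahat : Fin k × ℬ → 𝒜),
    IsPMF q ∧
    (∀ x : 𝒜 × ℬ × ℰ, pr q (fun ω => ω.2.2) x = p x) ∧
    Markov4 q (fun ω => ω.1) (fun ω => ω.2.1) (fun ω => ω.2.2.1) (fun ω => ω.2.2.2) ∧
    condMI q (fun ω => ω.2.1) (fun ω => ω.2.2.1) (fun ω => ω.2.2.2.1) ≤ R ∧
    expect q (fun ω => d ω.2.2.1 (Ahat (ω.2.1, ω.2.2.2.1))) ≤ D ∧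
    Δ ≤ max (condH q (fun ω => ω.2.2.1) (fun ω => (ω.2.1, ω.2.2.2.1))
          + condMI q (fun ω => ω.2.2.1) (fun ω => ω.2.2.2.1) (fun ω => ω.1)
          - condMI q (fun ω => ω.2.2.1) (fun ω => ω.2.2.2.2) (fun ω => ω.1)) 0

/-- Side information `B` (second coordinate) is less noisy than `E` (third coordinate):
`I(U;B) ≥ I(U;E)` for every `U` such that `U – A – (B,E)` is a Markov chain. -/
def LessNoisyBE (p : 𝒜 × ℬ × ℰ → ℝ) : Prop :=
  ∀ (m : ℕ) (q : Fin m × 𝒜 × ℬ × ℰ → ℝ), IsPMF q →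
    (∀ x, pr q (fun ω => ω.2) x = p x) →
    Markov q (fun ω => ω.1) (fun ω => ω.2.1) (fun ω => ω.2.2) →
    MI q (fun ω => ω.1) (fun ω => ω.2.2.2) ≤ MI q (fun ω => ω.1) (fun ω => ω.2.2.1)

/-- Side information `E` (third coordinate) is less noisy than `B` (second coordinate):
`I(U;E) ≥ I(U;B)` for every `U` such that `U – A – (B,E)` is a Markov chain. -/
def LessNoisyEB (p : 𝒜 × ℬ × ℰ → ℝ) : Prop :=
  ∀ (m : ℕ) (q : Fin m × 𝒜 × ℬ × ℰ → ℝ), IsPMF q →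
    (∀ x, pr q (fun ω => ω.2) x = p x) →
    Markov q (fun ω => ω.1) (fun ω => ω.2.1) (fun ω => ω.2.2) →
    MI q (fun ω => ω.1) (fun ω => ω.2.2.1) ≤ MI q (fun ω => ω.1) (fun ω => ω.2.2.2)

/-- The auxiliary random variable `Uᵢ = (W, B_{i+1}ⁿ, E^{i-1})` where `W = f(Aⁿ)`. -/
def auxU {𝒲 : Type*} (n : ℕ) (f : (Fin n → 𝒜) → 𝒲) (i : Fin n)
    (ω : Fin n → 𝒜 × ℬ × ℰ) :
    𝒲 × ({j : Fin n // i < j} → ℬ) × ({j : Fin n // j < i} → ℰ) :=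
  (f (An n ω), fun j => (ω j.1).2.1, fun j => (ω j.1).2.2)

/-- The auxiliary random variable `Vᵢ = (W, A^{i-1}, B^{i-1}, B_{i+1}ⁿ, E^{i-1})`
where `W = f(Aⁿ)`. -/
def auxV {𝒲 : Type*} (n : ℕ) (f : (Fin n → 𝒜) → 𝒲) (i : Fin n)
    (ω : Fin n → 𝒜 × ℬ × ℰ) :
    𝒲 × ({j : Fin n // j < i} → 𝒜) × ({j : Fin n // j < i} → ℬ)
      × ({j : Fin n // i < j} → ℬ) × ({j : Fin n // j < i} → ℰ) :=
  (f (An n ω), fun j => (ω j.1).1, fun j => (ω j.1).2.1,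
    fun j => (ω j.1).2.1, fun j => (ω j.1).2.2)

/-- Binary symmetric channel with crossover probability `p`: `BSC p a e` is the
probability that the output is `e` given that the input is `a`. -/
def BSC (p : ℝ) (a e : Bool) : ℝ := if e = a then 1 - p else p

/-- Binary erasure channel with erasure probability `ε` (output `none` is the erasure
symbol): `BEC ε a b` is the probability that the output is `b` given input `a`. -/
def BEC (ε : ℝ) (a : Bool) (b : Option Bool) : ℝ :=
  match b with
  | some b' => if b' = a then 1 - ε else 0
  | none => ε

/-- Binary entropy function (base 2). -/
def h2 (x : ℝ) : ℝ := -(x * Real.logb 2 x) - (1 - x) * Real.logb 2 (1 - x)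

/-- `sop a b = a ⋆ b = a(1-b) + (1-a)b`. -/
def sop (a b : ℝ) : ℝ := a * (1 - b) + (1 - a) * b

/-- Hamming distortion on `Bool`. -/
def hamming (a a' : Bool) : ℝ := if a = a' then 0 else 1

/-- Joint distribution of `(A,B,E)` for a uniform binary source `A`, with
`B = BEC(ε)(A)` at Bob and `E = BSC(p)(A)` at Eve (independent channel noises). -/
def binSrc (p ε : ℝ) : Bool × Option Bool × Bool → ℝ :=
  fun x => (1 / 2) * BEC ε x.1 x.2.1 * BSC p x.1 x.2.2

/-- Joint distribution of `(U,V,A,B,E)` in the achievability scheme for the binary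
example: `A` uniform, `V = A ⊕ Z_α`, `U = V ⊕ Z_β`, `B = BEC(ε)(A)`, `E = A ⊕ N_p`,
with all noises mutually independent.  Coordinates: `(u,v,a,b,e)`. -/
def exJoint (p ε α β : ℝ) : Bool × Bool × Bool × Option Bool × Bool → ℝ :=
  fun x =>
    (1 / 2) * BSC α x.2.2.1 x.2.1 * BSC β x.2.1 x.1
      * BEC ε x.2.2.1 x.2.2.2.1 * BSC p x.2.2.1 x.2.2.2.2

/-!
Both conditional mutual informations expand into joint entropies of blocks
`(W, E^a, B_{b+1}^n)`. In these terms the difference of the `i`-th summands is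
`Φ(i+1) - Φ(i)` with `Φ(m) = H(W, E^m) + H(W, B_{m+1}^n) - H(W, E^m, B_{m+1}^n)`, so the two
sums differ by `Φ(n) - Φ(0) = 0`. Regrouping coordinates costs nothing because the entropy of
a random variable depends only on the partition of the sample space into its level sets.
-/

theorem sum_pr_mul {X : Type*} [Fintype X] (w : Ω → ℝ) (f : Ω → X) (u : X → ℝ) :
    ∑ x, pr w f x * u x = ∑ ω, w ω * u (f ω) := by
  classical
  simp only [pr, Finset.sum_mul, ite_mul, zero_mul]
  rw [Finset.sum_comm]
  simp

theorem H_eq_neg_sum_logb_pr {X : Type*} [Fintype X] (w : Ω → ℝ) (f : Ω → X) :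
    H w f = -∑ ω, w ω * Real.logb 2 (pr w f (f ω)) := by
  rw [H, sum_pr_mul w f fun x => Real.logb 2 (pr w f x)]

theorem pr_apply_congr {X Y : Type*} (w : Ω → ℝ) {f : Ω → X} {g : Ω → Y}
    (hfg : ∀ ω ω', f ω = f ω' ↔ g ω = g ω') (ω : Ω) :
    pr w f (f ω) = pr w g (g ω) := by
  classical
  exact Finset.sum_congr rfl fun ω' _ => if_congr (hfg ω' ω) rfl rfl

theorem H_congr_of_eq_iff {X Y : Type*} [Fintype X] [Fintype Y] (w : Ω → ℝ)
    {f : Ω → X} {g : Ω → Y} (hfg : ∀ ω ω', f ω = f ω' ↔ g ω = g ω') :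
    H w f = H w g := by
  simp only [H_eq_neg_sum_logb_pr, pr_apply_congr w hfg]

theorem forall_le_iff_and_forall_lt {α : Type*} [PartialOrder α] {P : α → Prop} (i : α) :
    (∀ j ≤ i, P j) ↔ P i ∧ ∀ j < i, P j := by
  simp only [le_iff_lt_or_eq, or_imp, forall_and, forall_eq, and_comm]

theorem forall_ge_iff_and_forall_gt {α : Type*} [PartialOrder α] {P : α → Prop} (i : α) :
    (∀ j, i ≤ j → P j) ↔ P i ∧ ∀ j, i < j → P j := by
  simp only [le_iff_lt_or_eq, or_imp, forall_and, forall_eq', and_comm]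

section Cuts

variable {𝒲 : Type*} [Fintype 𝒲] {n : ℕ}

/-- `H(W, E^a, B_{b+1}^n)` in the one-based notation of the statement. -/
def cutH (w : Ω → ℝ) (W : Ω → 𝒲) (E : Ω → Fin n → ℰ) (B : Ω → Fin n → ℬ) (a b : ℕ) : ℝ :=
  H w fun ω => (W ω, (fun j : {j : Fin n // j.1 < a} => E ω j),
    fun j : {j : Fin n // b ≤ j.1} => B ω j)

variable (w : Ω → ℝ) (W : Ω → 𝒲) (E : Ω → Fin n → ℰ) (B : Ω → Fin n → ℬ) (i : Fin n)

theorem condMI_E_eq_cutH :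
    condMI w (fun ω => E ω i) (fun ω => fun j : {j : Fin n // i < j} => B ω j.1)
        (fun ω => (W ω, fun j : {j : Fin n // j < i} => E ω j.1)) =
      cutH w W E B (i + 1) n - cutH w W E B i n
        - (cutH w W E B (i + 1) (i + 1) - cutH w W E B i (i + 1)) := by
  have hE_le : H w (fun ω => (E ω i, (W ω, fun j : {j : Fin n // j < i} => E ω j.1))) =
      cutH w W E B (i + 1) n :=
    H_congr_of_eq_iff w fun ω ω' => by
      simp [funext_iff, forall_le_iff_and_forall_lt, and_comm, and_left_comm]
  have hE_lt : H w (fun ω => (W ω, fun j : {j : Fin n // j < i} => E ω j.1)) =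
      cutH w W E B i n :=
    H_congr_of_eq_iff w fun ω ω' => by simp [funext_iff]
  have hE_le_B_gt : H w (fun ω => (E ω i, ((fun j : {j : Fin n // i < j} => B ω j.1),
      (W ω, fun j : {j : Fin n // j < i} => E ω j.1)))) = cutH w W E B (i + 1) (i + 1) :=
    H_congr_of_eq_iff w fun ω ω' => by
      simp [funext_iff, forall_le_iff_and_forall_lt, and_comm, and_left_comm, and_assoc]
  have hE_lt_B_gt : H w (fun ω => ((fun j : {j : Fin n // i < j} => B ω j.1),
      (W ω, fun j : {j : Fin n // j < i} => E ω j.1))) = cutH w W E B i (i + 1) :=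
    H_congr_of_eq_iff w fun ω ω' => by simp [funext_iff, and_comm, and_assoc]
  rw [condMI, condH, condH, hE_le, hE_lt, hE_le_B_gt, hE_lt_B_gt]

theorem condMI_B_eq_cutH :
    condMI w (fun ω => B ω i) (fun ω => fun j : {j : Fin n // j < i} => E ω j.1)
        (fun ω => (W ω, fun j : {j : Fin n // i < j} => B ω j.1)) =
      cutH w W E B 0 i - cutH w W E B 0 (i + 1)
        - (cutH w W E B i i - cutH w W E B i (i + 1)) := by
  have hB_ge : H w (fun ω => (B ω i, (W ω, fun j : {j : Fin n // i < j} => B ω j.1))) =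
      cutH w W E B 0 i :=
    H_congr_of_eq_iff w fun ω ω' => by
      simp [funext_iff, forall_ge_iff_and_forall_gt, and_left_comm]
  have hB_gt : H w (fun ω => (W ω, fun j : {j : Fin n // i < j} => B ω j.1)) =
      cutH w W E B 0 (i + 1) :=
    H_congr_of_eq_iff w fun ω ω' => by simp [funext_iff]
  have hE_lt_B_ge : H w (fun ω => (B ω i, ((fun j : {j : Fin n // j < i} => E ω j.1),
      (W ω, fun j : {j : Fin n // i < j} => B ω j.1)))) = cutH w W E B i i :=
    H_congr_of_eq_iff w fun ω ω' => by
      simp [funext_iff, forall_ge_iff_and_forall_gt, and_left_comm]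
  have hE_lt_B_gt : H w (fun ω => ((fun j : {j : Fin n // j < i} => E ω j.1),
      (W ω, fun j : {j : Fin n // i < j} => B ω j.1))) = cutH w W E B i (i + 1) :=
    H_congr_of_eq_iff w fun ω ω' => by simp [funext_iff, and_left_comm]
  rw [condMI, condH, condH, hB_ge, hB_gt, hE_lt_B_ge, hE_lt_B_gt]

end Cuts

theorem csiszar_korner_sum_identity_general
    {Ω 𝒲 ℬ ℰ : Type*} [Fintype Ω] [Fintype 𝒲] [Fintype ℬ] [Fintype ℰ]
    (w : Ω → ℝ) (n : ℕ)
    (W : Ω → 𝒲) (B : Ω → Fin n → ℬ) (E : Ω → Fin n → ℰ) :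
    ∑ i : Fin n, condMI w (fun ω => E ω i)
        (fun ω => fun j : {j : Fin n // i < j} => B ω j.1)
        (fun ω => (W ω, fun j : {j : Fin n // j < i} => E ω j.1))
      = ∑ i : Fin n, condMI w (fun ω => B ω i)
          (fun ω => fun j : {j : Fin n // j < i} => E ω j.1)
          (fun ω => (W ω, fun j : {j : Fin n // i < j} => B ω j.1)) := by
  let Φ : ℕ → ℝ := fun m => cutH w W E B m n + cutH w W E B 0 m - cutH w W E B m m
  have step : ∀ i : Fin n,
      condMI w (fun ω => E ω i) (fun ω => fun j : {j : Fin n // i < j} => B ω j.1)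
          (fun ω => (W ω, fun j : {j : Fin n // j < i} => E ω j.1))
        - condMI w (fun ω => B ω i) (fun ω => fun j : {j : Fin n // j < i} => E ω j.1)
          (fun ω => (W ω, fun j : {j : Fin n // i < j} => B ω j.1)) = Φ (i + 1) - Φ i := by
    intro i
    rw [condMI_E_eq_cutH, condMI_B_eq_cutH]
    ring
  rw [← sub_eq_zero, ← Finset.sum_sub_distrib, Finset.sum_congr rfl fun i _ => step i,
    Fin.sum_univ_eq_sum_range (fun m => Φ (m + 1) - Φ m), Finset.sum_range_sub]
  ring

/-- **Csiszár–Körner sum identity**: for arbitrary jointly distributed `W`, `B₁,…,Bₙ`,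
`E₁,…,Eₙ`, `Σᵢ I(Eᵢ ; B_{i+1}ⁿ | W, E^{i-1}) = Σᵢ I(Bᵢ ; E^{i-1} | W, B_{i+1}ⁿ)`. -/
theorem csiszar_korner_sum_identity
    {Ω 𝒲 ℬ ℰ : Type*} [Fintype Ω] [Fintype 𝒲] [Fintype ℬ] [Fintype ℰ]
    (w : Ω → ℝ) (hw : IsPMF w) (n : ℕ)
    (W : Ω → 𝒲) (B : Ω → Fin n → ℬ) (E : Ω → Fin n → ℰ) :
    ∑ i : Fin n, condMI w (fun ω => E ω i)
        (fun ω => fun j : {j : Fin n // i < j} => B ω j.1)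
        (fun ω => (W ω, fun j : {j : Fin n // j < i} => E ω j.1))
      = ∑ i : Fin n, condMI w (fun ω => B ω i)
          (fun ω => fun j : {j : Fin n // j < i} => E ω j.1)
          (fun ω => (W ω, fun j : {j : Fin n // i < j} => B ω j.1)) :=
  csiszar_korner_sum_identity_general w n W B E

end SLSC

end
end

section
/- Less noisy comparison of BEC and BSC: let p ∈ [0,1/2] and ε ∈ [0,1] with ε ≤ 4p(1−p). Let A be any {0,1}-valued random variable, B = BEC(ε)(A), E = BSC(p)(A). Then B is less noisy than E: for every random variable U on a finite set such that U–A–(B,E) is a Markov chain, I(U;B) ≥ I(U;E). -/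
noncomputable section

namespace SLSC

open scoped BigOperators

variable {Ω : Type*} [Fintype Ω]

variable {𝒜 ℬ ℰ : Type*} [Fintype 𝒜] [Fintype ℬ] [Fintype ℰ]

/-!
For a binary input `A` with `P(A = 1 | U = u) = x_u`, the information `I(U;Y)` carried by the
output `Y` of a channel `K` is the Jensen gap `φ_K(E x_U) - E φ_K(x_U)` of the output entropy
`φ_K(x)` of a Bernoulli(`x`) input. Hence `I(U;B) - I(U;E)` is the Jensen gap of
`φ_BEC - φ_BSC = (1 - ε) h(x) - h(x ⋆ p) + h(ε)`, and it suffices that this function be concave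
on `[0,1]`. With `c = 1 - 2p` and `σ = x ⋆ p`, its second derivative is
`c² / (σ(1 - σ)) - (1 - ε) / (x(1 - x))`, which is `≤ 0` because
`σ(1 - σ) = p(1 - p) + c² x(1 - x)` and `c² = 1 - 4p(1 - p) ≤ 1 - ε`.
-/

open Real Finset

lemma pr_nonneg {X : Type*} {w : Ω → ℝ} (hw : ∀ ω, 0 ≤ w ω) (f : Ω → X) (x : X) :
    0 ≤ pr w f x :=
  sum_nonneg fun ω _ => by split_ifs <;> simp [hw ω]

lemma sum_pr {X : Type*} [Fintype X] (w : Ω → ℝ) (f : Ω → X) : ∑ x, pr w f x = ∑ ω, w ω := by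
  classical
  unfold pr
  rw [sum_comm]
  simp

lemma sum_pr_pair_right {X Y : Type*} [Fintype Y] (w : Ω → ℝ) (f : Ω → X) (g : Ω → Y) (x : X) :
    ∑ y, pr w (fun ω => (f ω, g ω)) (x, y) = pr w f x := by
  classical
  unfold pr
  rw [sum_comm]
  simp [Prod.ext_iff, ite_and]

lemma sum_pr_pair_left {X Y : Type*} [Fintype X] (w : Ω → ℝ) (f : Ω → X) (g : Ω → Y) (y : Y) :
    ∑ x, pr w (fun ω => (f ω, g ω)) (x, y) = pr w g y := by
  classical
  unfold pr
  rw [sum_comm]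
  simp [Prod.ext_iff, ite_and]

lemma pr_pair_le {X Y : Type*} {w : Ω → ℝ} (hw : ∀ ω, 0 ≤ w ω) (f : Ω → X) (g : Ω → Y)
    (x : X) (y : Y) : pr w (fun ω => (f ω, g ω)) (x, y) ≤ pr w f x :=
  sum_le_sum fun ω _ => by split_ifs with h1 h2 <;> simp_all [hw ω]

lemma H_eq_sum_negMulLog {X : Type*} [Fintype X] (w : Ω → ℝ) (f : Ω → X) :
    H w f = (∑ x, negMulLog (pr w f x)) / log 2 := by
  simp only [H, logb, negMulLog, sum_div, ← sum_neg_distrib]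
  congr 1 with x
  ring

lemma pr_fst_third_of_eq_mul {𝒰 : Type*} [Fintype 𝒰] {q : 𝒰 × 𝒜 × ℬ × ℰ → ℝ}
    {P : 𝒰 × 𝒜 → ℝ} {K : 𝒜 → ℬ → ℝ} {L : 𝒜 → ℰ → ℝ} (hL : ∀ a, ∑ e, L a e = 1)
    (hq : ∀ u a b e, q (u, a, b, e) = P (u, a) * K a b * L a e) (u : 𝒰) (b : ℬ) :
    pr q (fun ω => (ω.1, ω.2.2.1)) (u, b) = ∑ a, P (u, a) * K a b := by
  classical
  simp only [pr, Fintype.sum_prod_type, Prod.ext_iff, ite_and, hq]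
  simp [← mul_sum, hL]

lemma pr_fst_fourth_of_eq_mul {𝒰 : Type*} [Fintype 𝒰] {q : 𝒰 × 𝒜 × ℬ × ℰ → ℝ}
    {P : 𝒰 × 𝒜 → ℝ} {K : 𝒜 → ℬ → ℝ} {L : 𝒜 → ℰ → ℝ} (hK : ∀ a, ∑ b, K a b = 1)
    (hq : ∀ u a b e, q (u, a, b, e) = P (u, a) * K a b * L a e) (u : 𝒰) (e : ℰ) :
    pr q (fun ω => (ω.1, ω.2.2.2)) (u, e) = ∑ a, P (u, a) * L a e := by
  classical
  simp only [pr, Fintype.sum_prod_type, Prod.ext_iff, ite_and, hq]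
  simp [← sum_mul, ← mul_sum, hK]

def outputEntropy {𝒴 : Type*} [Fintype 𝒴] (K : Bool → 𝒴 → ℝ) (x : ℝ) : ℝ :=
  ∑ y, negMulLog (x * K true y + (1 - x) * K false y)

section Channel

variable {𝒴 : Type*} [Fintype 𝒴] {K : Bool → 𝒴 → ℝ}

lemma sum_negMulLog_mix (hK : ∀ a, ∑ y, K a y = 1) {t f : ℝ} (ht : 0 ≤ t) (hf : 0 ≤ f) :
    ∑ y, negMulLog (t * K true y + f * K false y)
      = negMulLog (t + f) + (t + f) * outputEntropy K (t / (t + f)) := by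
  rcases (add_nonneg ht hf).eq_or_lt with hs | hs
  · obtain ⟨rfl, rfl⟩ : t = 0 ∧ f = 0 := ⟨by linarith, by linarith⟩
    simp
  have hmix : ∀ y, t * K true y + f * K false y
      = (t / (t + f) * K true y + (1 - t / (t + f)) * K false y) * (t + f) := fun y => by
    field_simp
    ring
  have hsum : ∑ y, (t / (t + f) * K true y + (1 - t / (t + f)) * K false y) = 1 := by
    rw [sum_add_distrib, ← mul_sum, ← mul_sum, hK, hK]
    ring
  simp only [hmix, negMulLog_mul, sum_add_distrib, ← sum_mul, ← mul_sum, hsum, outputEntropy]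
  ring

variable {𝒰 : Type*} [Fintype 𝒰] {w : Ω → ℝ} {U : Ω → 𝒰} {A : Ω → Bool}

/-- Where `pr w U u = 0`, the junk value of the quotient is multiplied by `0`. -/
theorem MI_eq_outputEntropy_sub (hw : IsPMF w) {Y : Ω → 𝒴} (hK : ∀ a, ∑ y, K a y = 1)
    (hY : ∀ u y, pr w (fun ω => (U ω, Y ω)) (u, y)
      = ∑ a, pr w (fun ω => (U ω, A ω)) (u, a) * K a y) :
    MI w U Y = (outputEntropy K (pr w A true)
      - ∑ u, pr w U u * outputEntropy K (pr w (fun ω => (U ω, A ω)) (u, true) / pr w U u))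
        / log 2 := by
  set P := pr w (fun ω => (U ω, A ω))
  have hP : ∀ x, 0 ≤ P x := pr_nonneg hw.1 _
  have hU : ∀ u, pr w U u = P (u, true) + P (u, false) := fun u => by
    rw [← sum_pr_pair_right w U A, Fintype.sum_bool]
  have hA : pr w A true + pr w A false = 1 := by
    rw [← Fintype.sum_bool, sum_pr, hw.2]
  have hYm : ∀ y, pr w Y y = pr w A true * K true y + pr w A false * K false y := fun y => by
    simp only [← sum_pr_pair_left w U Y, hY, Fintype.sum_bool, sum_add_distrib, ← sum_mul,
      sum_pr_pair_left w U A, P]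
  have hHY : H w Y = outputEntropy K (pr w A true) / log 2 := by
    rw [H_eq_sum_negMulLog]
    simp only [hYm]
    rw [sum_negMulLog_mix hK (pr_nonneg hw.1 _ _) (pr_nonneg hw.1 _ _), hA]
    simp
  have hHUY : H w (fun ω => (U ω, Y ω))
      = (∑ u, (negMulLog (pr w U u) + pr w U u * outputEntropy K (P (u, true) / pr w U u)))
        / log 2 := by
    rw [H_eq_sum_negMulLog, Fintype.sum_prod_type]
    congr 1
    refine sum_congr rfl fun u _ => ?_
    simp only [hY, Fintype.sum_bool]
    rw [sum_negMulLog_mix hK (hP _) (hP _), hU]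
  rw [MI, H_eq_sum_negMulLog w U, hHY, hHUY, sum_add_distrib]
  ring

theorem MI_le_MI_of_concaveOn (hw : IsPMF w) {L : Bool → 𝒴 → ℝ} {𝒵 : Type*} [Fintype 𝒵]
    {M : Bool → 𝒵 → ℝ} {Y : Ω → 𝒴} {Z : Ω → 𝒵}
    (hL : ∀ a, ∑ y, L a y = 1) (hM : ∀ a, ∑ z, M a z = 1)
    (hY : ∀ u y, pr w (fun ω => (U ω, Y ω)) (u, y)
      = ∑ a, pr w (fun ω => (U ω, A ω)) (u, a) * L a y)
    (hZ : ∀ u z, pr w (fun ω => (U ω, Z ω)) (u, z)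
      = ∑ a, pr w (fun ω => (U ω, A ω)) (u, a) * M a z)
    (hconc : ConcaveOn ℝ (Set.Icc 0 1) fun x => outputEntropy L x - outputEntropy M x) :
    MI w U Z ≤ MI w U Y := by
  rw [MI_eq_outputEntropy_sub hw hM hZ, MI_eq_outputEntropy_sub hw hL hY]
  gcongr ?_ / _
  set x := fun u => pr w (fun ω => (U ω, A ω)) (u, true) / pr w U u
  have hle : ∀ u, pr w (fun ω => (U ω, A ω)) (u, true) ≤ pr w U u := fun u =>
    pr_pair_le hw.1 U A u true
  have hx : ∀ u ∈ univ, x u ∈ Set.Icc 0 1 := fun u _ =>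
    ⟨div_nonneg (pr_nonneg hw.1 _ _) (pr_nonneg hw.1 _ _),
      div_le_one_of_le₀ (hle u) (pr_nonneg hw.1 _ _)⟩
  have hwx : ∀ u, pr w U u * x u = pr w (fun ω => (U ω, A ω)) (u, true) := fun u =>
    mul_div_cancel_of_imp' fun h0 => le_antisymm (h0 ▸ hle u) (pr_nonneg hw.1 _ _)
  have hjensen := hconc.le_map_sum (fun u _ => pr_nonneg hw.1 U u) (by rw [sum_pr, hw.2]) hx
  simp only [smul_eq_mul, hwx, sum_pr_pair_left w U A, mul_sub, sum_sub_distrib] at hjensen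
  linarith

end Channel

lemma sum_BSC (p : ℝ) (a : Bool) : ∑ e, BSC p a e = 1 := by
  cases a <;> simp [BSC]

lemma sum_BEC (ε : ℝ) (a : Bool) : ∑ b, BEC ε a b = 1 := by
  cases a <;> simp [BEC, Fintype.sum_option]

lemma outputEntropy_BSC (p x : ℝ) :
    outputEntropy (BSC p) x = binEntropy (x * (1 - p) + (1 - x) * p) := by
  rw [outputEntropy, Fintype.sum_bool, binEntropy_eq_negMulLog_add_negMulLog_one_sub]
  simp only [BSC]
  norm_num
  congr 1
  ring

lemma outputEntropy_BEC (ε x : ℝ) :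
    outputEntropy (BEC ε) x = (1 - ε) * binEntropy x + binEntropy ε := by
  simp only [outputEntropy, Fintype.sum_option, Fintype.sum_bool, BEC,
    binEntropy_eq_negMulLog_add_negMulLog_one_sub]
  norm_num
  rw [← add_mul, add_sub_cancel, one_mul, negMulLog_mul, negMulLog_mul]
  ring

lemma hasDerivAt_log_one_sub_sub_log {x : ℝ} (h0 : x ≠ 0) (h1 : x ≠ 1) :
    HasDerivAt (fun x => log (1 - x) - log x) (-(x * (1 - x))⁻¹) x := by
  have h1' : 1 - x ≠ 0 := sub_ne_zero.2 (Ne.symm h1)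
  refine ((((hasDerivAt_id x).const_sub 1).log h1').sub (hasDerivAt_log h0)).congr_deriv ?_
  simp only [id]
  field_simp
  ring

lemma one_sub_two_mul_sq_mul_le {p ε x : ℝ} (hp0 : 0 ≤ p) (hp1 : p ≤ 1)
    (h : ε ≤ 4 * p * (1 - p)) (hx0 : 0 ≤ x) (hx1 : x ≤ 1) :
    (1 - 2 * p) ^ 2 * (x * (1 - x))
      ≤ (1 - ε) * ((x * (1 - p) + (1 - x) * p) * (1 - (x * (1 - p) + (1 - x) * p))) := by
  have hσ : (x * (1 - p) + (1 - x) * p) * (1 - (x * (1 - p) + (1 - x) * p))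
      = p * (1 - p) + (1 - 2 * p) ^ 2 * (x * (1 - x)) := by ring
  have hpp : 0 ≤ p * (1 - p) := mul_nonneg hp0 (sub_nonneg.2 hp1)
  have hX : 0 ≤ x * (1 - x) := mul_nonneg hx0 (sub_nonneg.2 hx1)
  have hX4 : x * (1 - x) ≤ 1 / 4 := by nlinarith [sq_nonneg (x - 1 / 2)]
  have hcX : 0 ≤ (1 - 2 * p) ^ 2 * (x * (1 - x)) := mul_nonneg (sq_nonneg _) hX
  rw [hσ]
  rcases le_total ε 0 with hε | hε
  · nlinarith [mul_nonneg (neg_nonneg.2 hε) hcX, mul_nonneg (neg_nonneg.2 hε) hpp]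
  · have hc : (1 - 2 * p) ^ 2 ≤ 1 - ε := by nlinarith
    nlinarith [mul_le_mul_of_nonneg_left hX4 (mul_nonneg hε (sq_nonneg (1 - 2 * p))),
      mul_le_mul_of_nonneg_left hc hε,
      mul_le_mul_of_nonneg_left h (sub_nonneg.2 (hc.trans' (sq_nonneg _)))]

lemma concaveOn_mul_binEntropy_sub_binEntropy_bsc {p ε : ℝ} (hp0 : 0 ≤ p) (hp1 : p ≤ 1)
    (h : ε ≤ 4 * p * (1 - p)) :
    ConcaveOn ℝ (Set.Icc 0 1)
      fun x => (1 - ε) * binEntropy x - binEntropy (x * (1 - p) + (1 - x) * p) := by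
  set σ : ℝ → ℝ := fun x => x * (1 - p) + (1 - x) * p
  have hσ : ∀ x, HasDerivAt σ (1 - 2 * p) x := fun x =>
    (((hasDerivAt_id x).mul_const (1 - p)).add
      (((hasDerivAt_id x).const_sub 1).mul_const p)).congr_deriv (by ring)
  have hσ_mem : ∀ x ∈ Set.Ioo (0 : ℝ) 1, 0 < σ x ∧ σ x < 1 := fun x ⟨hx0, hx1⟩ => by
    have hX : 0 < x * (1 - x) := mul_pos hx0 (by linarith)
    constructor <;> nlinarith [mul_nonneg hx0.le hp0, mul_nonneg hx0.le (sub_nonneg.2 hp1)]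
  refine concaveOn_of_hasDerivWithinAt2_nonpos (convex_Icc 0 1) (by fun_prop)
    (f' := fun x => (1 - ε) * (log (1 - x) - log x)
      - (log (1 - σ x) - log (σ x)) * (1 - 2 * p))
    (f'' := fun x => (1 - ε) * -(x * (1 - x))⁻¹
      - -(σ x * (1 - σ x))⁻¹ * (1 - 2 * p) * (1 - 2 * p)) ?_ ?_ ?_ <;>
    rw [interior_Icc] <;> intro x hx <;> obtain ⟨hσ0, hσ1⟩ := hσ_mem x hx
  · exact (((hasDerivAt_binEntropy hx.1.ne' hx.2.ne).const_mul (1 - ε)).sub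
      ((hasDerivAt_binEntropy hσ0.ne' hσ1.ne).comp x (hσ x))).hasDerivWithinAt
  · exact (((hasDerivAt_log_one_sub_sub_log hx.1.ne' hx.2.ne).const_mul (1 - ε)).sub
      (((hasDerivAt_log_one_sub_sub_log hσ0.ne' hσ1.ne).comp x (hσ x)).mul_const
        (1 - 2 * p))).hasDerivWithinAt
  · have hX : 0 < x * (1 - x) := mul_pos hx.1 (by linarith [hx.2])
    have hS : 0 < σ x * (1 - σ x) := mul_pos hσ0 (by linarith)
    have key : (1 - 2 * p) ^ 2 / (σ x * (1 - σ x)) ≤ (1 - ε) / (x * (1 - x)) :=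
      (div_le_div_iff₀ hS hX).2 (by
        linarith [one_sub_two_mul_sq_mul_le hp0 hp1 h hx.1.le hx.2.le])
    simp only [div_eq_mul_inv] at key
    linarith

lemma concaveOn_outputEntropy_BEC_sub_BSC {p ε : ℝ} (hp0 : 0 ≤ p) (hp1 : p ≤ 1)
    (h : ε ≤ 4 * p * (1 - p)) :
    ConcaveOn ℝ (Set.Icc 0 1) fun x => outputEntropy (BEC ε) x - outputEntropy (BSC p) x := by
  refine ((concaveOn_mul_binEntropy_sub_binEntropy_bsc hp0 hp1 h).add_const
    (binEntropy ε)).congr fun x _ => ?_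
  simp only [Pi.add_apply, outputEntropy_BEC, outputEntropy_BSC]
  ring

theorem bec_less_noisy_than_bsc_general (p ε : ℝ)
    (hp : p ∈ Set.Icc (0 : ℝ) (1 / 2))
    (h : ε ≤ 4 * p * (1 - p))
    (m : ℕ) (q : Fin m × Bool × Option Bool × Bool → ℝ) (hq : IsPMF q)
    (hstruct : ∀ u a b e,
      q (u, a, b, e) = pr q (fun ω => (ω.1, ω.2.1)) (u, a) * BEC ε a b * BSC p a e) :
    MI q (fun ω => ω.1) (fun ω => ω.2.2.2)
      ≤ MI q (fun ω => ω.1) (fun ω => ω.2.2.1) :=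
  MI_le_MI_of_concaveOn hq (sum_BEC ε) (sum_BSC p)
    (pr_fst_third_of_eq_mul (sum_BSC p) hstruct) (pr_fst_fourth_of_eq_mul (sum_BEC ε) hstruct)
    (concaveOn_outputEntropy_BEC_sub_BSC hp.1 (by linarith [hp.2]) h)

/-- **Less noisy comparison of BEC and BSC** for `ε ≤ 4p(1-p)`: for any binary random
variable `A` with `B = BEC(ε)(A)`, `E = BSC(p)(A)`, and any `U` with `U – A – (B,E)`
a Markov chain (i.e. the joint pmf factorizes as `P(U,A)·BEC(ε)·BSC(p)`),
`I(U;B) ≥ I(U;E)`. -/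
theorem bec_less_noisy_than_bsc (p ε : ℝ)
    (hp : p ∈ Set.Icc (0 : ℝ) (1 / 2)) (hε : ε ∈ Set.Icc (0 : ℝ) 1)
    (h : ε ≤ 4 * p * (1 - p))
    (m : ℕ) (q : Fin m × Bool × Option Bool × Bool → ℝ) (hq : IsPMF q)
    (hstruct : ∀ u a b e,
      q (u, a, b, e) = pr q (fun ω => (ω.1, ω.2.1)) (u, a) * BEC ε a b * BSC p a e) :
    MI q (fun ω => ω.1) (fun ω => ω.2.2.2)
      ≤ MI q (fun ω => ω.1) (fun ω => ω.2.2.1) :=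
  bec_less_noisy_than_bsc_general p ε hp h m q hq hstruct

end SLSC

end
end
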